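/- The polar of the set P(V) = {g Hermitian | g ≥ 0, tr(g) ≤ 1} equals D(V) = {f Hermitian | f ≥ 0, ‖f‖ ≤ 1}; consequently both D(V) and P(V) are quantum coherent spaces. -/

import Mathlib

open scoped ComplexOrder Matrix.Norms.L2Operator

def polar {n : ℕ} (C : Set (Matrix (Fin n) (Fin n) ℂ)) : Set (Matrix (Fin n) (Fin n) ℂ) :=
  {g | g.IsHermitian ∧ ∀ f ∈ C, 0 ≤ (f * g).trace ∧ (f * g).trace ≤ 1}

/-- The canonical QCS `D(V)`: positive semidefinite matrices of operator norm at most 1. -/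
noncomputable def ballD (n : ℕ) : Set (Matrix (Fin n) (Fin n) ℂ) :=
  {f | f.PosSemidef ∧ ‖f‖ ≤ 1}

/-- The canonical QCS `P(V)`: positive semidefinite matrices of trace at most 1. -/
def ballP (n : ℕ) : Set (Matrix (Fin n) (Fin n) ℂ) :=
  {f | f.PosSemidef ∧ f.trace ≤ 1}

/-! Rank-one projections `x xᴴ` turn `tr (f g)` into the quadratic form `xᴴ g x`, and
suitable positive multiples of them lie in both `P(V)` and `D(V)`; this gives `polar P ⊆ D` and
`polar D ⊆ P`. The reverse inclusions come from `tr (f g) ≤ tr f` for `0 ≤ f` and `g ≤ 1`,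
which is `0 ≤ tr (f (1 - g))`, together with `‖g‖ ≤ 1 ↔ g ≤ 1` for `0 ≤ g`. The bipolar
identities then follow by substitution. -/

open scoped MatrixOrder
open Matrix

namespace Matrix

variable {𝕜 m : Type*} [RCLike 𝕜] [Fintype m]

theorem PosSemidef.trace_mul_nonneg {A B : Matrix m m 𝕜} (hA : A.PosSemidef)
    (hB : B.PosSemidef) : 0 ≤ (A * B).trace := by
  classical
  obtain ⟨C, rfl⟩ := CStarAlgebra.nonneg_iff_eq_star_mul_self.mp hA.nonneg
  rw [star_eq_conjTranspose, Matrix.mul_assoc, trace_mul_comm]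
  exact (hB.mul_mul_conjTranspose_same C).trace_nonneg

theorem PosSemidef.trace_mul_le_trace [DecidableEq m] {A B : Matrix m m 𝕜} (hA : A.PosSemidef)
    (hB : B ≤ 1) : (A * B).trace ≤ A.trace := by
  simpa [Matrix.mul_sub, trace_sub] using hA.trace_mul_nonneg (le_iff.mp hB)

theorem trace_vecMulVec_self_star_mul (x : m → 𝕜) (B : Matrix m m 𝕜) :
    (vecMulVec x (star x) * B).trace = star x ⬝ᵥ B *ᵥ x := by
  rw [vecMulVec_mul, trace_vecMulVec, dotProduct_comm, dotProduct_mulVec]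

end Matrix

theorem RCLike.le_of_forall_smul_le_one {𝕜 : Type*} [RCLike 𝕜] {z w : 𝕜} (hz : 0 ≤ z)
    (hw : 0 ≤ w) (h : ∀ t : ℝ, 0 < t → t • w ≤ 1 → t • z ≤ 1) : z ≤ w := by
  obtain ⟨a, ha, rfl⟩ := RCLike.nonneg_iff_exists_ofReal.mp hz
  obtain ⟨b, hb, rfl⟩ := RCLike.nonneg_iff_exists_ofReal.mp hw
  have hreal : ∀ t c : ℝ, t • (c : 𝕜) ≤ 1 ↔ t * c ≤ 1 := fun t c => by
    rw [RCLike.real_smul_ofReal, ← RCLike.ofReal_mul, ← RCLike.ofReal_one, RCLike.ofReal_le_ofReal]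
  simp only [hreal] at h
  rw [RCLike.ofReal_le_ofReal]
  by_contra! hba
  have hab : 0 < a + b := by linarith
  have hscaled := h (2 / (a + b)) (by positivity)
    (by rw [div_mul_eq_mul_div, div_le_one hab]; linarith)
  rw [div_mul_eq_mul_div, div_le_one hab] at hscaled
  linarith

section Polar

variable {n : ℕ}

theorem posSemidef_of_mem_polar {C : Set (Matrix (Fin n) (Fin n) ℂ)}
    (hC : ∀ f : Matrix (Fin n) (Fin n) ℂ, f.PosSemidef → ∃ t : ℝ, 0 < t ∧ t • f ∈ C)
    {g : Matrix (Fin n) (Fin n) ℂ} (hg : g ∈ polar C) : g.PosSemidef := by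
  refine .of_dotProduct_mulVec_nonneg hg.1 fun x => ?_
  obtain ⟨t, ht, hmem⟩ := hC _ (posSemidef_vecMulVec_self_star x)
  have htr := (hg.2 _ hmem).1
  rw [Matrix.smul_mul, trace_smul, trace_vecMulVec_self_star_mul] at htr
  exact nonneg_of_smul_nonneg_of_pos_left htr ht

theorem exists_smul_mem_ballP {f : Matrix (Fin n) (Fin n) ℂ} (hf : f.PosSemidef) :
    ∃ t : ℝ, 0 < t ∧ t • f ∈ ballP n := by
  obtain ⟨a, ha, hfa⟩ : ∃ a : ℝ, 0 ≤ a ∧ (a : ℂ) = f.trace :=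
    RCLike.nonneg_iff_exists_ofReal.mp hf.trace_nonneg
  refine ⟨(1 + a)⁻¹, by positivity, hf.smul (by positivity), ?_⟩
  rw [trace_smul, ← hfa, Complex.real_smul, ← Complex.ofReal_mul, ← Complex.ofReal_one,
    Complex.real_le_real, inv_mul_le_one₀ (by positivity)]
  linarith

theorem exists_smul_mem_ballD {f : Matrix (Fin n) (Fin n) ℂ} (hf : f.PosSemidef) :
    ∃ t : ℝ, 0 < t ∧ t • f ∈ ballD n := by
  refine ⟨(1 + ‖f‖)⁻¹, by positivity, hf.smul (by positivity), ?_⟩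
  rw [norm_smul, Real.norm_of_nonneg (by positivity), inv_mul_le_one₀ (by positivity)]
  linarith

theorem mem_ballD_iff {f : Matrix (Fin n) (Fin n) ℂ} : f ∈ ballD n ↔ 0 ≤ f ∧ f ≤ 1 := by
  refine ⟨fun ⟨hf, hf1⟩ => ⟨hf.nonneg, ?_⟩, fun ⟨hf, hf1⟩ => ⟨hf.posSemidef, ?_⟩⟩
  · exact (CStarAlgebra.norm_le_one_iff_of_nonneg f hf.nonneg).mp hf1
  · exact (CStarAlgebra.norm_le_one_iff_of_nonneg f hf).mpr hf1

theorem le_one_of_mem_polar_ballP {g : Matrix (Fin n) (Fin n) ℂ} (hg : g ∈ polar (ballP n))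
    (hg0 : g.PosSemidef) : g ≤ 1 := by
  refine .of_dotProduct_mulVec_nonneg (isHermitian_one.sub hg.1) fun x => ?_
  rw [sub_mulVec, one_mulVec, dotProduct_sub, sub_nonneg]
  refine RCLike.le_of_forall_smul_le_one (hg0.dotProduct_mulVec_nonneg x)
    (dotProduct_star_self_nonneg x) fun t ht htx => ?_
  have hmem : t • vecMulVec x (star x) ∈ ballP n := by
    refine ⟨(posSemidef_vecMulVec_self_star x).smul ht.le, ?_⟩
    rwa [trace_smul, trace_vecMulVec, dotProduct_comm]
  simpa only [Matrix.smul_mul, trace_smul, trace_vecMulVec_self_star_mul] using (hg.2 _ hmem).2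

theorem polar_ballP : polar (ballP n) = ballD n := by
  ext g
  rw [mem_ballD_iff]
  constructor
  · intro hg
    have hg0 := posSemidef_of_mem_polar (fun _ => exists_smul_mem_ballP) hg
    exact ⟨hg0.nonneg, le_one_of_mem_polar_ballP hg hg0⟩
  · rintro ⟨hg0, hg1⟩
    exact ⟨hg0.posSemidef.isHermitian, fun f hf =>
      ⟨hf.1.trace_mul_nonneg hg0.posSemidef, (hf.1.trace_mul_le_trace hg1).trans hf.2⟩⟩

theorem polar_ballD : polar (ballD n) = ballP n := by
  ext g
  constructor
  · intro hg
    refine ⟨posSemidef_of_mem_polar (fun _ => exists_smul_mem_ballD) hg, ?_⟩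
    simpa using (hg.2 1 (mem_ballD_iff.mpr ⟨PosSemidef.one.nonneg, le_rfl⟩)).2
  · rintro ⟨hg0, hg1⟩
    refine ⟨hg0.isHermitian, fun f hf => ?_⟩
    obtain ⟨hf0, hf1⟩ := mem_ballD_iff.mp hf
    refine ⟨hf0.posSemidef.trace_mul_nonneg hg0, ?_⟩
    rw [trace_mul_comm]
    exact (hg0.trace_mul_le_trace hf1).trans hg1

end Polar

/-- The polar of P(V) equals D(V); consequently both are QCSs. -/
theorem polar_ballP_eq_ballD (n : ℕ) :
    polar (ballP n) = ballD n ∧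
      polar (polar (ballD n)) = ballD n ∧ polar (polar (ballP n)) = ballP n := by
  refine ⟨polar_ballP, ?_, ?_⟩
  · rw [polar_ballD, polar_ballP]
  · rw [polar_ballP, polar_ballD]
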